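/- arXiv:2111.09654 — 4 statements merged into one kernel-verified Lean document; each statement's English description precedes it below -/
import Mathlib

section
/- Let d ≥ 1 and let μ, ν be permutations of Ī_d. With X = Ī_d × {h,v} and ι, σ the permutations of X defined by ι(κ,h) = (κ,v), ι(κ,v) = (−κ,h), σ(κ,h) = (μ(κ),h), σ(κ,v) = (ν(κ),v), the subgroup of Sym(X) generated by ι and σ acts transitively on X if and only if the subgroup of Sym(Ī_d) generated by μ, ν and the sign-inversion map κ ↦ −κ acts transitively on Ī_d. -/
/-!
Projecting `X = Ī_d × {h,v}` onto `Ī_d` sends the generators `ι`, `σ` to `1`, sign inversion,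
`μ` and `ν`, so every `⟨ι,σ⟩`-orbit projects into a single `⟨μ,ν,−⟩`-orbit. Conversely, on the
horizontal copy `Ī_d × {h}` the elements `σ`, `ι⁻¹σι` and `ι²` act as `μ`, `ν` and sign inversion,
and `ι` moves each horizontal point to the vertical point above it.
-/

abbrev IBar (d : ℕ) : Type := {κ : ℤ // κ ≠ 0 ∧ |κ| ≤ (d : ℤ)}

instance IBar.finite (d : ℕ) : Finite (IBar d) := by
  have h : ({κ : ℤ | κ ≠ 0 ∧ |κ| ≤ (d : ℤ)}).Finite :=
    Set.Finite.subset (Set.finite_Icc (-(d : ℤ)) (d : ℤ))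
      (fun κ hκ => Set.mem_Icc.mpr (abs_le.mp hκ.2))
  exact h.to_subtype

/-- Negation (sign inversion) on `IBar d`. -/
def negI {d : ℕ} (κ : IBar d) : IBar d :=
  ⟨-κ.1, ⟨neg_ne_zero.mpr κ.2.1, by rw [abs_neg]; exact κ.2.2⟩⟩

lemma negI_invol {d : ℕ} : Function.Involutive (negI (d := d)) :=
  fun κ => Subtype.ext (neg_neg _)

/-- Sign inversion as a permutation of `IBar d`. -/
def negP (d : ℕ) : Equiv.Perm (IBar d) := ⟨negI, negI, negI_invol, negI_invol⟩

/-- `X d` : two copies of `IBar d`; `true` = horizontal, `false` = vertical. -/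
abbrev XBar (d : ℕ) : Type := IBar d × Bool

/-- The permutation ι : (κ,h) ↦ (κ,v), (κ,v) ↦ (−κ,h). -/
def iotaP (d : ℕ) : Equiv.Perm (XBar d) where
  toFun p := if p.2 then (p.1, false) else (negI p.1, true)
  invFun p := if p.2 then (negI p.1, false) else (p.1, true)
  left_inv := by rintro ⟨κ, b⟩; cases b <;> simp [negI_invol κ]
  right_inv := by rintro ⟨κ, b⟩; cases b <;> simp [negI_invol κ]

/-- The permutation σ : (κ,h) ↦ (μ(κ),h), (κ,v) ↦ (ν(κ),v). -/
def sigmaP {d : ℕ} (μ ν : Equiv.Perm (IBar d)) : Equiv.Perm (XBar d) where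
  toFun p := if p.2 then (μ p.1, true) else (ν p.1, false)
  invFun p := if p.2 then (μ.symm p.1, true) else (ν.symm p.1, false)
  left_inv := by rintro ⟨κ, b⟩; cases b <;> simp
  right_inv := by rintro ⟨κ, b⟩; cases b <;> simp

/-- The index in `{0,…,d−1}` corresponding to `|κ| ∈ {1,…,d}`. -/
def idx {d : ℕ} (κ : IBar d) : Fin d :=
  ⟨κ.1.natAbs - 1, by
    have h1 : κ.1 ≠ 0 := κ.2.1
    have h2 : (κ.1.natAbs : ℤ) ≤ (d : ℤ) := by
      rw [← Int.abs_eq_natAbs]; exact κ.2.2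
    omega⟩

open Equiv

namespace Equiv.Perm

variable {α β : Type*}

def orbitCompatible (H : Subgroup (Perm β)) (f : α → β) : Subgroup (Perm α) where
  carrier := {g | ∀ a, ∃ h ∈ H, h (f a) = f (g a)}
  one_mem' a := ⟨1, H.one_mem, rfl⟩
  mul_mem' {g₁ g₂} hg₁ hg₂ a := by
    obtain ⟨h₂, hh₂, e₂⟩ := hg₂ a
    obtain ⟨h₁, hh₁, e₁⟩ := hg₁ (g₂ a)
    exact ⟨h₁ * h₂, H.mul_mem hh₁ hh₂, by rw [mul_apply, e₂, e₁, mul_apply]⟩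
  inv_mem' {g} hg a := by
    obtain ⟨h, hh, e⟩ := hg (g⁻¹ a)
    refine ⟨h⁻¹, H.inv_mem hh, ?_⟩
    rw [inv_eq_iff_eq, e]
    simp

def liftableAlong (G : Subgroup (Perm β)) (j : α → β) : Subgroup (Perm α) where
  carrier := {h | ∃ g ∈ G, ∀ a, g (j a) = j (h a)}
  one_mem' := ⟨1, G.one_mem, fun _ => rfl⟩
  mul_mem' {h₁ h₂} := by
    rintro ⟨g₁, hg₁, e₁⟩ ⟨g₂, hg₂, e₂⟩
    exact ⟨g₁ * g₂, G.mul_mem hg₁ hg₂, fun a => by rw [mul_apply, e₂, e₁, mul_apply]⟩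
  inv_mem' {h} := by
    rintro ⟨g, hg, e⟩
    refine ⟨g⁻¹, G.inv_mem hg, fun a => ?_⟩
    rw [inv_eq_iff_eq, e]
    simp

end Equiv.Perm

section

variable {d : ℕ}

@[simp] lemma iotaP_apply_true (κ : IBar d) : iotaP d (κ, true) = (κ, false) := rfl

@[simp] lemma sigmaP_apply_false (μ ν : Perm (IBar d)) (κ : IBar d) :
    sigmaP μ ν (κ, false) = (ν κ, false) := rfl

lemma closure_iotaP_sigmaP_le_orbitCompatible (μ ν : Perm (IBar d)) :
    Subgroup.closure {iotaP d, sigmaP μ ν} ≤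
      Perm.orbitCompatible (Subgroup.closure {μ, ν, negP d}) Prod.fst := by
  have mem (p : Perm (IBar d)) (hp : p = μ ∨ p = ν ∨ p = negP d) :
      p ∈ Subgroup.closure {μ, ν, negP d} := Subgroup.subset_closure hp
  rw [Subgroup.closure_le]
  rintro g (rfl | rfl) ⟨κ, _ | _⟩
  · exact ⟨negP d, mem _ (by simp), rfl⟩
  · exact ⟨1, Subgroup.one_mem _, rfl⟩
  · exact ⟨ν, mem _ (by simp), rfl⟩
  · exact ⟨μ, mem _ (by simp), rfl⟩

lemma closure_negP_le_liftableAlong (μ ν : Perm (IBar d)) :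
    Subgroup.closure {μ, ν, negP d} ≤
      Perm.liftableAlong (Subgroup.closure {iotaP d, sigmaP μ ν}) (·, true) := by
  have hι : iotaP d ∈ Subgroup.closure {iotaP d, sigmaP μ ν} := Subgroup.subset_closure (by simp)
  have hσ : sigmaP μ ν ∈ Subgroup.closure {iotaP d, sigmaP μ ν} :=
    Subgroup.subset_closure (by simp)
  rw [Subgroup.closure_le]
  rintro p (rfl | rfl | rfl)
  · exact ⟨sigmaP p ν, hσ, fun _ => rfl⟩
  · exact ⟨(iotaP d)⁻¹ * sigmaP μ p * iotaP d, mul_mem (mul_mem (inv_mem hι) hσ) hι,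
      fun κ => by rw [Perm.mul_apply, Perm.mul_apply, iotaP_apply_true, sigmaP_apply_false,
        Perm.inv_eq_iff_eq]; rfl⟩
  · exact ⟨iotaP d * iotaP d, mul_mem hι hι, fun _ => rfl⟩

end

theorem stmt2_general (d : ℕ) (μ ν : Equiv.Perm (IBar d)) :
    (∀ ζ η : XBar d, ∃ g ∈ Subgroup.closure {iotaP d, sigmaP μ ν}, g ζ = η) ↔
    (∀ κ lam : IBar d, ∃ g ∈ Subgroup.closure {μ, ν, negP d}, g κ = lam) := by
  set G := Subgroup.closure {iotaP d, sigmaP μ ν}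
  constructor
  · intro hX κ lam
    obtain ⟨g, hg, hgκ⟩ := hX (κ, true) (lam, true)
    obtain ⟨h, hh, e⟩ := closure_iotaP_sigmaP_le_orbitCompatible μ ν hg (κ, true)
    exact ⟨h, hh, by rw [e, hgκ]⟩
  · intro hI
    have hι : iotaP d ∈ G := Subgroup.subset_closure (by simp)
    have reach_horizontal (ζ : XBar d) : ∃ g ∈ G, ∃ κ, g (κ, true) = ζ := by
      obtain ⟨κ, _ | _⟩ := ζ
      · exact ⟨iotaP d, hι, κ, rfl⟩
      · exact ⟨1, one_mem G, κ, rfl⟩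
    intro ζ η
    obtain ⟨g₁, hg₁, κ, rfl⟩ := reach_horizontal ζ
    obtain ⟨g₂, hg₂, lam, rfl⟩ := reach_horizontal η
    obtain ⟨h, hh, rfl⟩ := hI κ lam
    obtain ⟨g, hg, e⟩ := closure_negP_le_liftableAlong μ ν hh
    exact ⟨g₂ * g * g₁⁻¹, mul_mem (mul_mem hg₂ hg) (inv_mem hg₁), by simp [e]⟩

/-- ⟨ι,σ⟩ acts transitively on X = Ī_d × {h,v} iff ⟨μ,ν, sign-inversion⟩
acts transitively on Ī_d. -/
theorem stmt2 (d : ℕ) (hd : 1 ≤ d) (μ ν : Equiv.Perm (IBar d)) :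
    (∀ ζ η : XBar d, ∃ g ∈ Subgroup.closure {iotaP d, sigmaP μ ν}, g ζ = η) ↔
    (∀ κ lam : IBar d, ∃ g ∈ Subgroup.closure {μ, ν, negP d}, g κ = lam) :=
  stmt2_general d μ ν
end

section
/- Let X be a finite nonempty set and let μ, ν be fixed-point-free involutions of X such that the subgroup ⟨μ,ν⟩ of Sym(X) acts transitively on X. Then the cardinality of X is even, the permutation μ∘ν has order |X|/2, the cyclic subgroup generated by μ∘ν has exactly two orbits on X, each of cardinality |X|/2, and μ interchanges these two orbits. -/
/-- `O` is an orbit of the cyclic group generated by the permutation `f`. -/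
def IsCycOrbit {X : Type*} (f : Equiv.Perm X) (O : Set X) : Prop :=
  ∃ x : X, O = {y : X | ∃ n : ℤ, (f ^ n) x = y}

/-!
Write `f = μ * ν`. Conjugation by `μ` inverts `f`, so `⟨μ, ν⟩` is dihedral: its elements are the
`f ^ n` and `f ^ n * μ`. By transitivity every point lies in the `f`-orbit of `x₀` or of `μ x₀`.
These orbits differ, since `f ^ k x = μ x` would give a fixed point of `μ` (`k` even) or of `ν`
(`k` odd), and `μ` swaps them, so each has `|X| / 2` points. Finally `⟨f⟩` acts freely: a power of
`f` fixing `x₀` fixes the orbit of `x₀` because it commutes with `f`, and the orbit of `μ x₀`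
because `μ` conjugates it to its inverse. Hence `orderOf f` is the size of an orbit.
-/

open Equiv Equiv.Perm

section Group

variable {G : Type*} [Group G] {μ ν : G}

theorem semiconjBy_zpow_mul_of_mul_self_eq_one (hμ : μ * μ = 1) (hν : ν * ν = 1) (n : ℤ) :
    SemiconjBy μ ((μ * ν) ^ n) ((μ * ν) ^ (-n)) := by
  have h : SemiconjBy μ (μ * ν) (μ * ν)⁻¹ := by
    rw [SemiconjBy, mul_inv_rev, inv_eq_of_mul_eq_one_right hμ, inv_eq_of_mul_eq_one_right hν,
      ← mul_assoc, hμ, one_mul, mul_assoc, hμ, mul_one]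
  simpa only [inv_zpow'] using h.zpow_right n

theorem exists_zpow_or_zpow_mul_of_mem_closure_pair (hμ : μ * μ = 1) (hν : ν * ν = 1) {g : G}
    (hg : g ∈ Subgroup.closure {μ, ν}) :
    ∃ n : ℤ, g = (μ * ν) ^ n ∨ g = (μ * ν) ^ n * μ := by
  have hgen : ∀ x ∈ ({μ, ν} : Set G), ∃ n : ℤ, x = (μ * ν) ^ n ∨ x = (μ * ν) ^ n * μ := by
    rintro x (rfl | rfl)
    · exact ⟨0, .inr (by rw [zpow_zero, one_mul])⟩
    · refine ⟨-1, .inr ?_⟩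
      rw [zpow_neg_one, mul_inv_rev, inv_eq_of_mul_eq_one_right hμ,
        inv_eq_of_mul_eq_one_right hν, mul_assoc, hμ, mul_one]
  have hinv : ∀ x ∈ ({μ, ν} : Set G), x⁻¹ = x := by
    rintro x (rfl | rfl)
    exacts [inv_eq_of_mul_eq_one_right hμ, inv_eq_of_mul_eq_one_right hν]
  have hsemi := semiconjBy_zpow_mul_of_mul_self_eq_one hμ hν
  induction hg using Subgroup.closure_induction'' with
  | mem x hx => exact hgen x hx
  | inv_mem x hx => rw [hinv x hx]; exact hgen x hx
  | one => exact ⟨0, .inl (zpow_zero _).symm⟩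
  | mul x y _ _ hx hy =>
    obtain ⟨a, rfl | rfl⟩ := hx <;> obtain ⟨b, rfl | rfl⟩ := hy
    · exact ⟨a + b, .inl (zpow_add _ a b).symm⟩
    · exact ⟨a + b, .inr (by rw [zpow_add, mul_assoc])⟩
    · exact ⟨a - b, .inr (by
        rw [mul_assoc, (hsemi b).eq, ← mul_assoc, ← zpow_add, sub_eq_add_neg])⟩
    · exact ⟨a - b, .inl (by
        rw [mul_assoc, ← mul_assoc μ, (hsemi b).eq, mul_assoc _ μ μ, hμ, mul_one, ← zpow_add,
          sub_eq_add_neg])⟩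

end Group

namespace Equiv.Perm

theorem setOf_sameCycle_eq {X : Type*} {f : Perm X} {x y : X} (h : f.SameCycle x y) :
    {z | f.SameCycle x z} = {z | f.SameCycle y z} :=
  Set.ext fun _ => ⟨h.symm.trans, h.trans⟩

theorem orderOf_eq_ncard_setOf_sameCycle {X : Type*} {f : Perm X} {x : X}
    (hfree : ∀ n : ℤ, (f ^ n) x = x → f ^ n = 1) :
    orderOf f = {y | f.SameCycle x y}.ncard := by
  have hstab : MulAction.stabilizer (Subgroup.zpowers f) x = ⊥ := by
    rw [Subgroup.eq_bot_iff_forall]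
    rintro ⟨_, n, rfl⟩ hn
    exact Subtype.ext (hfree n hn)
  have horbit : MulAction.orbit (Subgroup.zpowers f) x = {y | f.SameCycle x y} := by
    ext y
    rw [MulAction.mem_orbit_iff, Subgroup.exists_zpowers]
    rfl
  rw [← Nat.card_zpowers, ← Subgroup.index_bot, ← hstab, MulAction.index_stabilizer, horbit]

variable {X : Type*} {μ ν : Perm X}

theorem apply_apply_of_mul_self_eq_one (hμ : μ * μ = 1) (x : X) : μ (μ x) = x :=
  DFunLike.congr_fun hμ x

theorem zpow_mul_apply_of_mul_self_eq_one (hμ : μ * μ = 1) (hν : ν * ν = 1) (n : ℤ) (x : X) :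
    μ (((μ * ν) ^ n) x) = ((μ * ν) ^ (-n)) (μ x) :=
  DFunLike.congr_fun (semiconjBy_zpow_mul_of_mul_self_eq_one hμ hν n).eq x

theorem SameCycle.apply_of_mul_self_eq_one (hμ : μ * μ = 1) (hν : ν * ν = 1) {x y : X}
    (h : (μ * ν).SameCycle x y) : (μ * ν).SameCycle (μ x) (μ y) := by
  obtain ⟨n, rfl⟩ := h
  exact ⟨-n, (zpow_mul_apply_of_mul_self_eq_one hμ hν n x).symm⟩

theorem not_sameCycle_apply_self (hμ : μ * μ = 1) (hν : ν * ν = 1) (hμf : ∀ x, μ x ≠ x)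
    (hνf : ∀ x, ν x ≠ x) (x : X) : ¬(μ * ν).SameCycle x (μ x) := by
  set f := μ * ν
  have hf : ∀ (a b : ℤ) (y : X), (f ^ a) ((f ^ b) y) = (f ^ (a + b)) y := fun a b y => by
    rw [zpow_add, Perm.mul_apply]
  rintro ⟨k, hk⟩
  -- `(μ * ν) ^ n x` is fixed by `μ` if `k = 2 * n`, and by `ν = μ * (μ * ν)` if `k = 2 * n + 1`.
  obtain ⟨n, rfl | rfl⟩ := Int.even_or_odd' k
  · apply hμf ((f ^ n) x)
    rw [zpow_mul_apply_of_mul_self_eq_one hμ hν, ← hk, hf]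
    congr 2; ring
  · apply hνf ((f ^ n) x)
    have hν' : ν = μ * f := by rw [← mul_assoc, hμ, one_mul]
    calc ν ((f ^ n) x) = μ ((f ^ (1 : ℤ)) ((f ^ n) x)) := by rw [hν', zpow_one]; rfl
      _ = (f ^ (-(1 + n))) ((f ^ (2 * n + 1)) x) := by
        rw [hf, zpow_mul_apply_of_mul_self_eq_one hμ hν, hk]
      _ = (f ^ n) x := by rw [hf]; congr 2; ring

theorem sameCycle_or_sameCycle_apply_of_forall_mem_closure (hμ : μ * μ = 1) (hν : ν * ν = 1)
    (htrans : ∀ x y : X, ∃ g ∈ Subgroup.closure {μ, ν}, g x = y) (x y : X) :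
    (μ * ν).SameCycle x y ∨ (μ * ν).SameCycle (μ x) y := by
  obtain ⟨g, hg, rfl⟩ := htrans x y
  obtain ⟨n, rfl | rfl⟩ := exists_zpow_or_zpow_mul_of_mem_closure_pair hμ hν hg
  · exact .inl ⟨n, rfl⟩
  · exact .inr ⟨n, rfl⟩

theorem zpow_eq_one_of_zpow_apply_eq_self (hμ : μ * μ = 1) (hν : ν * ν = 1) {x : X}
    (hcover : ∀ y, (μ * ν).SameCycle x y ∨ (μ * ν).SameCycle (μ x) y) {n : ℤ}
    (hn : ((μ * ν) ^ n) x = x) : (μ * ν) ^ n = 1 := by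
  set f := μ * ν
  have hfix : ∀ m : ℤ, (f ^ m) x = x → ∀ y, f.SameCycle x y → (f ^ m) y = y := by
    rintro m hm _ ⟨k, rfl⟩
    rw [← Perm.mul_apply, ← zpow_add, add_comm, zpow_add, Perm.mul_apply, hm]
  ext y
  rcases hcover y with h | h
  · exact hfix n hn y h
  · have hy := apply_apply_of_mul_self_eq_one hμ y
    have hμy : f.SameCycle x (μ y) := by
      simpa only [apply_apply_of_mul_self_eq_one hμ x] using h.apply_of_mul_self_eq_one hμ hν
    have hn' : (f ^ (-n)) x = x := by rw [zpow_neg, Perm.inv_eq_iff_eq, hn]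
    rw [Perm.one_apply, ← hy, ← neg_neg n, ← zpow_mul_apply_of_mul_self_eq_one hμ hν,
      hfix (-n) hn' _ hμy]

end Equiv.Perm

/-- if μ, ν are fixed-point-free involutions of a finite nonempty set X with
⟨μ,ν⟩ transitive, then |X| is even, μ∘ν has order |X|/2, ⟨μ∘ν⟩ has exactly two orbits,
each of cardinality |X|/2, and μ interchanges the two orbits. -/
theorem stmt4 {X : Type*} [Finite X] [Nonempty X] (μ ν : Equiv.Perm X)
    (hμ2 : μ * μ = 1) (hν2 : ν * ν = 1)
    (hμf : ∀ x : X, μ x ≠ x) (hνf : ∀ x : X, ν x ≠ x)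
    (htrans : ∀ x y : X, ∃ g ∈ Subgroup.closure {μ, ν}, g x = y) :
    Even (Nat.card X) ∧
    orderOf (μ * ν) = Nat.card X / 2 ∧
    ∃ O₁ O₂ : Set X,
      IsCycOrbit (μ * ν) O₁ ∧ IsCycOrbit (μ * ν) O₂ ∧ O₁ ≠ O₂ ∧
      (∀ O : Set X, IsCycOrbit (μ * ν) O → O = O₁ ∨ O = O₂) ∧
      Nat.card O₁ = Nat.card X / 2 ∧ Nat.card O₂ = Nat.card X / 2 ∧
      (∀ x ∈ O₁, μ x ∈ O₂) ∧ (∀ x ∈ O₂, μ x ∈ O₁) := by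
  obtain ⟨x₀⟩ := ‹Nonempty X›
  have hcover := sameCycle_or_sameCycle_apply_of_forall_mem_closure hμ2 hν2 htrans x₀
  set O₁ := {y | (μ * ν).SameCycle x₀ y}
  set O₂ := {y | (μ * ν).SameCycle (μ x₀) y}
  have hx₀ : x₀ ∈ O₁ := .refl _ _
  have hswap₁ : ∀ x ∈ O₁, μ x ∈ O₂ := fun _ h => h.apply_of_mul_self_eq_one hμ2 hν2
  have hswap₂ : ∀ x ∈ O₂, μ x ∈ O₁ := fun x h => by
    have := h.apply_of_mul_self_eq_one hμ2 hν2
    rwa [apply_apply_of_mul_self_eq_one hμ2 x₀] at this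
  have hdisj : Disjoint O₁ O₂ := Set.disjoint_left.2 fun _ h₁ h₂ =>
    not_sameCycle_apply_self hμ2 hν2 hμf hνf x₀ (h₁.trans h₂.symm)
  have hcard : O₁.ncard = O₂.ncard :=
    (Set.ncard_le_ncard_of_injOn μ hswap₁ μ.injective.injOn).antisymm
      (Set.ncard_le_ncard_of_injOn μ hswap₂ μ.injective.injOn)
  have hunion : O₁ ∪ O₂ = Set.univ := Set.eq_univ_of_forall hcover
  have hX : Nat.card X = O₁.ncard + O₂.ncard := by
    rw [← Set.ncard_univ, ← hunion, Set.ncard_union_eq hdisj]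
  have horder : orderOf (μ * ν) = O₁.ncard :=
    orderOf_eq_ncard_setOf_sameCycle fun _ => zpow_eq_one_of_zpow_apply_eq_self hμ2 hν2 hcover
  refine ⟨⟨O₁.ncard, by omega⟩, by omega, O₁, O₂, ⟨x₀, rfl⟩, ⟨μ x₀, rfl⟩,
    fun h => Set.disjoint_left.1 hdisj hx₀ (h ▸ hx₀), ?_,
    (Nat.card_coe_set_eq O₁).trans (by omega), (Nat.card_coe_set_eq O₂).trans (by omega),
    hswap₁, hswap₂⟩
  rintro _ ⟨x, rfl⟩
  rcases hcover x with h | h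
  · exact .inl (setOf_sameCycle_eq h).symm
  · exact .inr (setOf_sameCycle_eq h).symm
end

section
/- Let X be a finite nonempty set and let μ, ν be fixed-point-free involutions of X such that the subgroup ⟨μ,ν⟩ of Sym(X) acts transitively on X. Then the centralizer in Sym(X) of the subgroup ⟨μ,ν⟩ (equivalently, the set of permutations of X commuting with both μ and ν) has cardinality equal to the cardinality of X. -/
/-!
Put `σ = μν`. Since `μ` and `ν` are involutions, `μ σ μ⁻¹ = σ⁻¹`, so every element of `⟨μ, ν⟩` is
a rotation `σᵏ` or a reflection `σᵏμ`. A reflection is conjugate to `μ` (`k` even) or to `ν`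
(`k` odd), hence has no fixed point; a rotation fixing one point fixes every point, because
conjugating by `⟨μ, ν⟩` only changes it to `σ^(±k)`, which fixes the same points, and the action
is transitive. So `⟨μ, ν⟩` acts regularly on `X`. For a regular permutation group `G` with
orbit bijection `e : G ≃ X, g ↦ g x₀`, evaluation at `x₀` maps the centralizer bijectively onto
`X`: it is injective by transitivity, and `y = e a` is the image of `e ∘ (· * a) ∘ e⁻¹`.
-/

open Equiv Subgroup

section Dihedral

variable {M : Type*} [Group M] {μ ν : M}

theorem mul_zpow_mul_of_involutive (hμ : μ * μ = 1) (hν : ν * ν = 1) (k : ℤ) :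
    μ * (μ * ν) ^ k = (μ * ν) ^ (-k) * μ := by
  have hconj : μ * (μ * ν) * μ⁻¹ = (μ * ν)⁻¹ := by
    rw [mul_inv_rev, inv_eq_of_mul_eq_one_right hμ, inv_eq_of_mul_eq_one_right hν,
      ← mul_assoc, hμ, one_mul]
  rw [← mul_inv_eq_iff_eq_mul, ← conj_zpow, hconj, zpow_neg, inv_zpow]

theorem exists_eq_zpow_or_zpow_mul_of_mem_closure_pair (hμ : μ * μ = 1) (hν : ν * ν = 1) {g : M}
    (hg : g ∈ closure {μ, ν}) : ∃ k : ℤ, g = (μ * ν) ^ k ∨ g = (μ * ν) ^ k * μ := by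
  have hcomm := mul_zpow_mul_of_involutive hμ hν
  induction hg using closure_induction with
  | mem p hp =>
    rcases hp with rfl | rfl
    · exact ⟨0, .inr (by simp)⟩
    · refine ⟨-1, .inr ?_⟩
      rw [zpow_neg_one, mul_inv_rev, inv_mul_cancel_right, inv_eq_of_mul_eq_one_right hν]
  | one => exact ⟨0, .inl (zpow_zero _).symm⟩
  | mul a b _ _ iha ihb =>
    obtain ⟨j, rfl | rfl⟩ := iha <;> obtain ⟨k, rfl | rfl⟩ := ihb
    · exact ⟨j + k, .inl (zpow_add _ j k).symm⟩
    · exact ⟨j + k, .inr (by rw [zpow_add, mul_assoc])⟩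
    · refine ⟨j - k, .inr ?_⟩
      rw [mul_assoc, hcomm, ← mul_assoc, ← zpow_add, sub_eq_add_neg]
    · refine ⟨j - k, .inl ?_⟩
      rw [mul_assoc, ← mul_assoc μ, hcomm, mul_assoc, hμ, mul_one, ← zpow_add, sub_eq_add_neg]
  | inv a _ iha =>
    obtain ⟨j, rfl | rfl⟩ := iha
    · exact ⟨-j, .inl (zpow_neg _ j).symm⟩
    · refine ⟨j, .inr ?_⟩
      rw [mul_inv_rev, inv_eq_of_mul_eq_one_right hμ, ← zpow_neg, hcomm, neg_neg]

theorem inv_mul_zpow_mul_of_mem_closure_pair (hμ : μ * μ = 1) (hν : ν * ν = 1) {g : M}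
    (hg : g ∈ closure {μ, ν}) (k : ℤ) :
    g⁻¹ * (μ * ν) ^ k * g = (μ * ν) ^ k ∨ g⁻¹ * (μ * ν) ^ k * g = (μ * ν) ^ (-k) := by
  have hrot (j : ℤ) : ((μ * ν) ^ j)⁻¹ * (μ * ν) ^ k * (μ * ν) ^ j = (μ * ν) ^ k := by
    rw [mul_assoc, (Commute.zpow_zpow_self _ k j).eq, inv_mul_cancel_left]
  obtain ⟨j, rfl | rfl⟩ := exists_eq_zpow_or_zpow_mul_of_mem_closure_pair hμ hν hg
  · exact .inl (hrot j)
  · right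
    rw [mul_inv_rev, inv_eq_of_mul_eq_one_right hμ,
      show ∀ a b : M, μ * a⁻¹ * b * (a * μ) = μ * (a⁻¹ * b * a) * μ by intros; group, hrot,
      mul_zpow_mul_of_involutive hμ hν, mul_assoc, hμ, mul_one]

theorem isConj_zpow_mul (hμ : μ * μ = 1) (hν : ν * ν = 1) (k : ℤ) :
    IsConj μ ((μ * ν) ^ k * μ) ∨ IsConj ν ((μ * ν) ^ k * μ) := by
  have hcomm := mul_zpow_mul_of_involutive hμ hν
  simp only [isConj_iff]
  obtain ⟨m, rfl | rfl⟩ := Int.even_or_odd' k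
  · refine .inl ⟨(μ * ν) ^ m, ?_⟩
    rw [← zpow_neg, mul_assoc, hcomm, neg_neg, ← mul_assoc, ← zpow_add, two_mul]
  · refine .inr ⟨(μ * ν) ^ m * μ, ?_⟩
    calc (μ * ν) ^ m * μ * ν * ((μ * ν) ^ m * μ)⁻¹
        = (μ * ν) ^ m * (μ * ν) * (μ * (μ * ν) ^ (-m)) := by
          rw [mul_inv_rev, inv_eq_of_mul_eq_one_right hμ, zpow_neg]; group
      _ = (μ * ν) ^ (2 * m + 1) * μ := by
          rw [hcomm, neg_neg, ← mul_assoc, ← zpow_add_one, ← zpow_add]; ring_nf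

end Dihedral

namespace Equiv.Perm

variable {X : Type*}

theorem exists_apply_eq_self_of_isConj {f g : Perm X} (hfg : IsConj f g) {x : X}
    (hx : g x = x) : ∃ y, f y = y := by
  obtain ⟨c, rfl⟩ := isConj_iff.mp hfg
  exact ⟨c⁻¹ x, by rwa [mul_apply, mul_apply, ← eq_inv_iff_eq] at hx⟩

section Regular

variable {G : Subgroup (Perm X)} {x₀ : X}

theorem bijective_apply_of_free_of_transitive (htrans : ∀ y, ∃ g ∈ G, g x₀ = y)
    (hfree : ∀ g ∈ G, g x₀ = x₀ → g = 1) : Function.Bijective fun g : G ↦ (g : Perm X) x₀ := by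
  refine ⟨fun g h hgh ↦ ?_, fun y ↦ ?_⟩
  · have := hfree _ (G.mul_mem (G.inv_mem h.2) g.2) (by simp_all)
    exact Subtype.ext (inv_mul_eq_one.mp this).symm
  · obtain ⟨g, hg, rfl⟩ := htrans y
    exact ⟨⟨g, hg⟩, rfl⟩

theorem bijective_apply_centralizer (htrans : ∀ y, ∃ g ∈ G, g x₀ = y)
    (hfree : ∀ g ∈ G, g x₀ = x₀ → g = 1) :
    Function.Bijective fun c : centralizer (G : Set (Perm X)) ↦ (c : Perm X) x₀ := by
  refine ⟨fun c d hcd ↦ Subtype.ext <| Perm.ext fun y ↦ ?_, fun y ↦ ?_⟩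
  · obtain ⟨g, hg, rfl⟩ := htrans y
    have hc := congrArg (· x₀) (mem_centralizer_iff.mp c.2 g hg)
    have hd := congrArg (· x₀) (mem_centralizer_iff.mp d.2 g hg)
    simp_all
  · let e : G ≃ X := .ofBijective _ (bijective_apply_of_free_of_transitive htrans hfree)
    have he_mul (g h : G) : e (g * h) = (g : Perm X) (e h) := rfl
    have he_symm (g : G) (z : X) : e.symm ((g : Perm X) z) = g * e.symm z := by
      rw [e.symm_apply_eq, he_mul, e.apply_symm_apply]
    obtain ⟨a, rfl⟩ := e.surjective y
    refine ⟨⟨e.symm.trans ((Equiv.mulRight a).trans e), mem_centralizer_iff.mpr fun g hg ↦ ?_⟩, ?_⟩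
    · ext z
      simp only [Perm.mul_apply, trans_apply, coe_mulRight]
      rw [← Subtype.coe_mk g hg, ← he_mul, he_symm, mul_assoc]
    · simp only [trans_apply, coe_mulRight]
      rw [show x₀ = e 1 from rfl, e.symm_apply_apply, one_mul]

theorem card_centralizer_of_free_of_transitive (htrans : ∀ y, ∃ g ∈ G, g x₀ = y)
    (hfree : ∀ g ∈ G, g x₀ = x₀ → g = 1) :
    Nat.card (centralizer (G : Set (Perm X))) = Nat.card X :=
  Nat.card_eq_of_bijective _ (bijective_apply_centralizer htrans hfree)

end Regular

section InvolutionPair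

variable {μ ν : Perm X} {x : X}

theorem zpow_eq_one_of_apply_eq_self (hμ : μ * μ = 1) (hν : ν * ν = 1)
    (htrans : ∀ y, ∃ g ∈ closure {μ, ν}, g x = y) {k : ℤ} (hx : ((μ * ν) ^ k) x = x) :
    (μ * ν) ^ k = 1 := by
  have hx' : ((μ * ν) ^ (-k)) x = x := by rw [zpow_neg, inv_eq_iff_eq, hx]
  ext y
  obtain ⟨g, hg, rfl⟩ := htrans y
  suffices (g⁻¹ * (μ * ν) ^ k * g) x = x by
    rwa [mul_apply, mul_apply, inv_eq_iff_eq] at this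
  rcases inv_mul_zpow_mul_of_mem_closure_pair hμ hν hg k with h | h <;> rwa [h]

theorem zpow_mul_apply_ne (hμ : μ * μ = 1) (hν : ν * ν = 1) (hμf : ∀ x, μ x ≠ x)
    (hνf : ∀ x, ν x ≠ x) (k : ℤ) : ((μ * ν) ^ k * μ) x ≠ x := fun hx ↦ by
  rcases isConj_zpow_mul hμ hν k with h | h
  · obtain ⟨y, hy⟩ := exists_apply_eq_self_of_isConj h hx
    exact hμf y hy
  · obtain ⟨y, hy⟩ := exists_apply_eq_self_of_isConj h hx
    exact hνf y hy

theorem eq_one_of_mem_closure_pair_of_apply_eq_self (hμ : μ * μ = 1) (hν : ν * ν = 1)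
    (hμf : ∀ x, μ x ≠ x) (hνf : ∀ x, ν x ≠ x) (htrans : ∀ y, ∃ g ∈ closure {μ, ν}, g x = y)
    {g : Perm X} (hg : g ∈ closure {μ, ν}) (hx : g x = x) : g = 1 := by
  obtain ⟨k, rfl | rfl⟩ := exists_eq_zpow_or_zpow_mul_of_mem_closure_pair hμ hν hg
  · exact zpow_eq_one_of_apply_eq_self hμ hν htrans hx
  · exact absurd hx (zpow_mul_apply_ne hμ hν hμf hνf k)

end InvolutionPair

end Equiv.Perm

theorem stmt5_general {X : Type*} [Nonempty X] (μ ν : Equiv.Perm X)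
    (hμ2 : μ * μ = 1) (hν2 : ν * ν = 1)
    (hμf : ∀ x : X, μ x ≠ x) (hνf : ∀ x : X, ν x ≠ x)
    (htrans : ∀ x y : X, ∃ g ∈ Subgroup.closure {μ, ν}, g x = y) :
    Nat.card (Subgroup.centralizer {μ, ν} : Subgroup (Equiv.Perm X)) = Nat.card X := by
  obtain ⟨x₀⟩ := ‹Nonempty X›
  rw [← centralizer_closure]
  exact Equiv.Perm.card_centralizer_of_free_of_transitive (htrans x₀) fun g hg ↦
    Equiv.Perm.eq_one_of_mem_closure_pair_of_apply_eq_self hμ2 hν2 hμf hνf (htrans x₀) hg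

/-- if μ, ν are fixed-point-free involutions of a finite nonempty set X with
⟨μ,ν⟩ transitive, then the centralizer of {μ,ν} in Sym(X) has cardinality |X|. -/
theorem stmt5 {X : Type*} [Finite X] [Nonempty X] (μ ν : Equiv.Perm X)
    (hμ2 : μ * μ = 1) (hν2 : ν * ν = 1)
    (hμf : ∀ x : X, μ x ≠ x) (hνf : ∀ x : X, ν x ≠ x)
    (htrans : ∀ x y : X, ∃ g ∈ Subgroup.closure {μ, ν}, g x = y) :
    Nat.card (Subgroup.centralizer {μ, ν} : Subgroup (Equiv.Perm X)) = Nat.card X :=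
  stmt5_general μ ν hμ2 hν2 hμf hνf htrans
end

section
/- Let d ≥ 1, let μ, ν be permutations of Ī_d, and let τ be a permutation of Ī_d that is odd (τ(−κ) = −τ(κ) for all κ) and commutes with both μ and ν. If M ∈ (ℝ_{>0})^{{1,…,d}} is a moduli list compatible with (μ,ν), then the relabelled list M' defined by M'_λ = M_{|τ(λ)|} for λ ∈ {1,…,d} is also compatible with (μ,ν). -/
/-- A moduli list `M` (indexed by {1,…,d} via `Fin d`) is compatible with the origami
`(μ,ν)` if for every orbit C of ⟨ι∘σ⟩ on X = Ī_d × {h,v}, the product of `M |κ|` over the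
vertical elements (κ,v) of C equals the product over the horizontal elements (κ,h) of C. -/
def Compatible (d : ℕ) (μ ν : Equiv.Perm (IBar d)) (M : Fin d → ℝ) : Prop :=
  ∀ ζ : XBar d,
    (∏ᶠ κ ∈ {κ : IBar d | ∃ n : ℤ, ((iotaP d * sigmaP μ ν) ^ n) ζ = (κ, false)}, M (idx κ)) =
    ∏ᶠ κ ∈ {κ : IBar d | ∃ n : ℤ, ((iotaP d * sigmaP μ ν) ^ n) ζ = (κ, true)}, M (idx κ)

/-- The element `λ ∈ {1,…,d} ⊆ Ī_d` corresponding to `lam : Fin d`. -/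
def toIBar {d : ℕ} (lam : Fin d) : IBar d :=
  ⟨((lam : ℕ) : ℤ) + 1, by
    have h : (lam : ℕ) < d := lam.isLt
    refine ⟨by omega, ?_⟩
    rw [abs_of_pos (by omega)]
    omega⟩

/-!
Lifted to `X = Ī_d × {h,v}` sheetwise, the odd permutation `τ` commutes with `ι ∘ σ`, so it maps the `h`- and `v`-parts of the orbit of `ζ` bijectively onto
those of the orbit of `τ ζ`. Since `τ` is odd, `M'_{|κ|} = M_{|τ κ|}` for every `κ ∈ Ī_d`, so both
products for `M'` over the orbit of `ζ` are the products for `M` over the orbit of `τ ζ`.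
-/

lemma idx_negI {d : ℕ} (κ : IBar d) : idx (negI κ) = idx κ := by
  simp [idx, negI]

lemma toIBar_idx_eq_or_eq_negI {d : ℕ} (κ : IBar d) :
    toIBar (idx κ) = κ ∨ toIBar (idx κ) = negI κ := by
  have hval : (toIBar (idx κ)).1 = (κ.1.natAbs : ℤ) := by
    have : 1 ≤ κ.1.natAbs := Int.natAbs_pos.mpr κ.2.1
    show (((κ.1.natAbs - 1 : ℕ) : ℤ) + 1) = _
    omega
  rcases Int.natAbs_eq κ.1 with h | h
  · exact .inl (Subtype.ext (hval.trans h.symm))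
  · exact .inr (Subtype.ext (by rw [hval]; show _ = -κ.1; omega))

lemma idx_apply_toIBar_idx {d : ℕ} {τ : Equiv.Perm (IBar d)}
    (hodd : ∀ κ, τ (negI κ) = negI (τ κ)) (κ : IBar d) :
    idx (τ (toIBar (idx κ))) = idx (τ κ) := by
  rcases toIBar_idx_eq_or_eq_negI κ with h | h <;> simp [h, hodd, idx_negI]

abbrev liftX {d : ℕ} (τ : Equiv.Perm (IBar d)) : Equiv.Perm (XBar d) :=
  τ.prodCongr (Equiv.refl Bool)

lemma commute_liftX_iotaP_mul_sigmaP {d : ℕ} {μ ν τ : Equiv.Perm (IBar d)}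
    (hodd : ∀ κ, τ (negI κ) = negI (τ κ)) (hτμ : Commute τ μ) (hτν : Commute τ ν) :
    Commute (liftX τ) (iotaP d * sigmaP μ ν) := by
  have hμ (κ : IBar d) : τ (μ κ) = μ (τ κ) := congrArg (· κ) hτμ.eq
  have hν (κ : IBar d) : τ (ν κ) = ν (τ κ) := congrArg (· κ) hτν.eq
  ext ⟨κ, b⟩ <;> cases b <;> simp [iotaP, sigmaP, hodd, hμ, hν]

lemma image_orbit_slice {α β : Type*} {ρ : Equiv.Perm (α × β)} {τ : Equiv.Perm α}
    (h : Commute (τ.prodCongr (Equiv.refl β)) ρ) (ζ : α × β) (b : β) :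
    τ '' {a | ∃ n : ℤ, (ρ ^ n) ζ = (a, b)} =
      {a | ∃ n : ℤ, (ρ ^ n) (τ.prodCongr (Equiv.refl β) ζ) = (a, b)} := by
  have hn (n : ℤ) (x : α × β) :
      (ρ ^ n) (τ.prodCongr (Equiv.refl β) x) = τ.prodCongr (Equiv.refl β) ((ρ ^ n) x) := by
    rw [← Equiv.Perm.mul_apply, ← (h.zpow_right n).eq, Equiv.Perm.mul_apply]
  ext a
  simp only [Set.mem_image, Set.mem_ofPred_eq, hn]
  constructor
  · rintro ⟨a, ⟨n, hζ⟩, rfl⟩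
    exact ⟨n, by rw [hζ]; rfl⟩
  · rintro ⟨n, hζ⟩
    refine ⟨τ.symm a, ⟨n, ?_⟩, τ.apply_symm_apply a⟩
    rw [← (τ.prodCongr (Equiv.refl β)).symm_apply_apply ((ρ ^ n) ζ), hζ]
    rfl

theorem stmt8_general (d : ℕ) (μ ν τ : Equiv.Perm (IBar d))
    (hodd : ∀ κ : IBar d, τ (negI κ) = negI (τ κ))
    (hτμ : τ * μ = μ * τ) (hτν : τ * ν = ν * τ)
    (M : Fin d → ℝ)
    (hcomp : Compatible d μ ν M) :
    Compatible d μ ν (fun lam => M (idx (τ (toIBar lam)))) := by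
  intro ζ
  have hc := commute_liftX_iotaP_mul_sigmaP hodd hτμ hτν
  have hslice (b : Bool) :
      (∏ᶠ κ ∈ {κ : IBar d | ∃ n : ℤ, ((iotaP d * sigmaP μ ν) ^ n) ζ = (κ, b)},
        M (idx (τ (toIBar (idx κ))))) =
      ∏ᶠ κ ∈ {κ : IBar d | ∃ n : ℤ, ((iotaP d * sigmaP μ ν) ^ n) (liftX τ ζ) = (κ, b)},
        M (idx κ) := by
    rw [← image_orbit_slice hc, finprod_mem_image τ.injective.injOn]
    exact finprod_mem_congr rfl fun κ _ => by rw [idx_apply_toIBar_idx hodd]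
  rw [hslice false, hslice true]
  exact hcomp (liftX τ ζ)

/-- if τ is an odd permutation of Ī_d commuting with μ and ν, and M is a
moduli list compatible with (μ,ν), then the relabelled list λ ↦ M_{|τ(λ)|} is also
compatible with (μ,ν). -/
theorem stmt8 (d : ℕ) (hd : 1 ≤ d) (μ ν τ : Equiv.Perm (IBar d))
    (hodd : ∀ κ : IBar d, τ (negI κ) = negI (τ κ))
    (hτμ : τ * μ = μ * τ) (hτν : τ * ν = ν * τ)
    (M : Fin d → ℝ) (hpos : ∀ lam, 0 < M lam)
    (hcomp : Compatible d μ ν M) :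
    Compatible d μ ν (fun lam => M (idx (τ (toIBar lam)))) :=
  stmt8_general d μ ν τ hodd hτμ hτν M hcomp
end
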